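/- Let (c_i)_{i≥1} be real numbers with c_i → 0 as i → ∞, and put φ_i = [[1, 0],[c_i, 1]] ∈ SL(2,ℝ). Then for every τ > 0 the sequence (f^{(k)}(τ))_{k≥1} is unbounded. -/
import Mathlib


/-- The matrix `h^t = [[1, t],[0, 1]] ∈ SL(2,ℝ)`. -/
def hMat (t : ℝ) : Matrix (Fin 2) (Fin 2) ℝ := !![1, t; 0, 1]

/-- The kicked evolution `f^{(k)}(τ) = φ_k h^τ φ_{k-1} h^τ ⋯ φ_1 h^τ`. -/
def kickedEvol (φ : ℕ → Matrix (Fin 2) (Fin 2) ℝ) (τ : ℝ) :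
    ℕ → Matrix (Fin 2) (Fin 2) ℝ
  | 0 => 1
  | k + 1 => φ (k + 1) * hMat τ * kickedEvol φ τ k

/-- A sequence of matrices is bounded if all its entries are uniformly bounded
(equivalently, it lies in a compact subset). -/
def MatSeqBounded (f : ℕ → Matrix (Fin 2) (Fin 2) ℝ) : Prop :=
  ∃ C : ℝ, ∀ k : ℕ, 1 ≤ k → ∀ i j : Fin 2, |f k i j| ≤ C

lemma aux_tendsto (b : ℕ → ℝ) (M : ℝ)
    (hsum : ∀ m n : ℕ, 1 ≤ m → |∑ i ∈ Finset.range n, b (m + i)| ≤ M)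
    (hinc : ∀ δ : ℝ, 0 < δ → ∃ K : ℕ, ∀ k, K ≤ k → |b (k + 1) - b k| ≤ δ) :
    Filter.Tendsto b Filter.atTop (nhds 0) := by
  rw [Metric.tendsto_atTop]
  intro ε hε
  set N₀ : ℕ := ⌈M / (ε / 2)⌉₊ with hN₀
  have hNge : M ≤ (N₀ : ℝ) * (ε / 2) := by
    have h1 : M / (ε / 2) ≤ (N₀ : ℝ) := Nat.le_ceil _
    have h2 : (0 : ℝ) < ε / 2 := by linarith
    calc M = M / (ε / 2) * (ε / 2) := by field_simp
      _ ≤ (N₀ : ℝ) * (ε / 2) := mul_le_mul_of_nonneg_right h1 h2.le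
  set δ : ℝ := ε / (2 * (N₀ + 1)) with hδdef
  have hδ : 0 < δ := by positivity
  obtain ⟨K, hK⟩ := hinc δ hδ
  refine ⟨max K 1, fun k hk => ?_⟩
  have hk1 : 1 ≤ k := le_trans (le_max_right _ _) hk
  have hkK : K ≤ k := le_trans (le_max_left _ _) hk
  have htel : ∀ i : ℕ, |b (k + i) - b k| ≤ i * δ := by
    intro i
    induction i with
    | zero => simp
    | succ i ih =>
      have h1 : |b (k + i + 1) - b (k + i)| ≤ δ :=
        hK (k + i) (le_trans hkK (Nat.le_add_right _ _))
      have h2 : b (k + (i + 1)) - b k = (b (k + i + 1) - b (k + i)) + (b (k + i) - b k) := by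
        have : k + (i + 1) = k + i + 1 := by omega
        rw [this]; ring
      rw [h2]
      calc |(b (k + i + 1) - b (k + i)) + (b (k + i) - b k)|
          ≤ |b (k + i + 1) - b (k + i)| + |b (k + i) - b k| := abs_add_le _ _
        _ ≤ δ + ↑i * δ := by linarith
        _ = (↑(i + 1)) * δ := by push_cast; ring
  have hNδ1 : ((N₀ : ℝ) + 1) * δ = ε / 2 := by
    have hne : (N₀ : ℝ) + 1 ≠ 0 := by positivity
    rw [hδdef]; field_simp
  have hNδ : (N₀ : ℝ) * δ ≤ ε / 2 := by nlinarith [hδ.le]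
  have hstep : ∀ i ∈ Finset.range (N₀ + 1), |b (k + i) - b k| ≤ ε / 2 := by
    intro i hi
    have hiN : (i : ℝ) ≤ (N₀ : ℝ) := by
      exact_mod_cast Nat.le_of_lt_succ (Finset.mem_range.mp hi)
    calc |b (k + i) - b k| ≤ i * δ := htel i
      _ ≤ N₀ * δ := mul_le_mul_of_nonneg_right hiN hδ.le
      _ ≤ ε / 2 := hNδ
  have hsum' := hsum k (N₀ + 1) hk1
  have hdecomp : ∑ i ∈ Finset.range (N₀ + 1), b (k + i)
      = ((N₀ : ℝ) + 1) * b k + ∑ i ∈ Finset.range (N₀ + 1), (b (k + i) - b k) := by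
    rw [Finset.sum_sub_distrib, Finset.sum_const, Finset.card_range]
    push_cast; ring
  have hdiffs : |∑ i ∈ Finset.range (N₀ + 1), (b (k + i) - b k)| ≤ ((N₀ : ℝ) + 1) * (ε / 2) := by
    calc |∑ i ∈ Finset.range (N₀ + 1), (b (k + i) - b k)|
        ≤ ∑ i ∈ Finset.range (N₀ + 1), |b (k + i) - b k| := Finset.abs_sum_le_sum_abs _ _
      _ ≤ ∑ _i ∈ Finset.range (N₀ + 1), (ε / 2) := Finset.sum_le_sum hstep
      _ = ((N₀ : ℝ) + 1) * (ε / 2) := by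
          rw [Finset.sum_const, Finset.card_range]; push_cast; ring
  have hmain : ((N₀ : ℝ) + 1) * |b k| < ((N₀ : ℝ) + 1) * ε := by
    have h1 : |((N₀ : ℝ) + 1) * b k| ≤ |∑ i ∈ Finset.range (N₀ + 1), b (k + i)|
        + |∑ i ∈ Finset.range (N₀ + 1), (b (k + i) - b k)| := by
      rw [hdecomp]
      have := abs_sub_abs_le_abs_sub (((N₀ : ℝ) + 1) * b k + ∑ i ∈ Finset.range (N₀ + 1), (b (k + i) - b k)) (∑ i ∈ Finset.range (N₀ + 1), (b (k + i) - b k))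
      have h2 := abs_add_le (((N₀ : ℝ) + 1) * b k) (∑ i ∈ Finset.range (N₀ + 1), (b (k + i) - b k))
      calc |((N₀ : ℝ) + 1) * b k|
          = |(((N₀ : ℝ) + 1) * b k + ∑ i ∈ Finset.range (N₀ + 1), (b (k + i) - b k))
              - ∑ i ∈ Finset.range (N₀ + 1), (b (k + i) - b k)| := by congr 1; ring
        _ ≤ |((N₀ : ℝ) + 1) * b k + ∑ i ∈ Finset.range (N₀ + 1), (b (k + i) - b k)|
              + |∑ i ∈ Finset.range (N₀ + 1), (b (k + i) - b k)| := abs_sub _ _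
    rw [abs_mul, abs_of_pos (by positivity : (0:ℝ) < (N₀ : ℝ) + 1)] at h1
    have hM2 : M < ((N₀ : ℝ) + 1) * (ε / 2) := by nlinarith
    nlinarith
  rw [Real.dist_eq, sub_zero]
  have hpos : (0 : ℝ) < (N₀ : ℝ) + 1 := by positivity
  exact lt_of_mul_lt_mul_left hmain hpos.le
/-- for lower-triangular kicks `φ_i = [[1, 0],[c_i, 1]]` with `c_i → 0`,
for every period `τ > 0` the kicked evolution is unbounded. -/
theorem stmt_13 (c : ℕ → ℝ) (hc : Filter.Tendsto c Filter.atTop (nhds 0))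
    (φ : ℕ → Matrix (Fin 2) (Fin 2) ℝ)
    (hφ : ∀ i : ℕ, 1 ≤ i → φ i = !![1, 0; c i, 1]) :
    ∀ τ : ℝ, 0 < τ → ¬ MatSeqBounded (kickedEvol φ τ) := by
  intro τ hτ hB
  obtain ⟨C, hC⟩ := hB
  set F := kickedEvol φ τ with hF
  set D : ℝ := |C| + 1 with hD
  have hDpos : (0 : ℝ) < D := by positivity
  have hbound : ∀ k, 1 ≤ k → ∀ i j : Fin 2, |F k i j| ≤ D := by
    intro k hk i j
    have := hC k hk i j
    have := le_abs_self C
    simp only [hD]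
    linarith
  have hrecdef : ∀ k : ℕ, F (k + 1) = φ (k + 1) * hMat τ * F k := fun k => rfl
  have hrec0 : ∀ k (j : Fin 2), F (k + 1) 0 j = F k 0 j + τ * F k 1 j := by
    intro k j
    rw [hrecdef k, hφ (k + 1) (by omega)]
    simp [hMat, Matrix.mul_apply, Fin.sum_univ_two]
  have hrec1 : ∀ k (j : Fin 2), F (k + 1) 1 j = F k 1 j + c (k + 1) * F (k + 1) 0 j := by
    intro k j
    rw [hrecdef k, hφ (k + 1) (by omega)]
    simp [hMat, Matrix.mul_apply, Fin.sum_univ_two]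
    ring
  have hdet : ∀ k, (F k).det = 1 := by
    intro k
    induction k with
    | zero => simp [hF, kickedEvol]
    | succ k ih =>
      rw [hrecdef k, Matrix.det_mul, Matrix.det_mul, ih, hφ (k + 1) (by omega)]
      simp [hMat, Matrix.det_fin_two_of]
  have hsumid : ∀ (j : Fin 2) m n, F (m + n) 0 j
      = F m 0 j + τ * ∑ i ∈ Finset.range n, F (m + i) 1 j := by
    intro j m n
    induction n with
    | zero => simp
    | succ n ih =>
      have h1 : m + (n + 1) = (m + n) + 1 := by omega
      rw [h1, hrec0 (m + n) j, ih, Finset.sum_range_succ]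
      ring
  have hsum : ∀ (j : Fin 2) m n, 1 ≤ m →
      |∑ i ∈ Finset.range n, F (m + i) 1 j| ≤ 2 * D / τ := by
    intro j m n hm
    have h1 := hsumid j m n
    have h2 : τ * ∑ i ∈ Finset.range n, F (m + i) 1 j = F (m + n) 0 j - F m 0 j := by
      linarith
    have h3 : |τ * ∑ i ∈ Finset.range n, F (m + i) 1 j| ≤ 2 * D := by
      rw [h2]
      have ha := hbound m hm 0 j
      have hb := hbound (m + n) (le_trans hm (Nat.le_add_right _ _)) 0 j
      calc |F (m + n) 0 j - F m 0 j| ≤ |F (m + n) 0 j| + |F m 0 j| := abs_sub _ _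
        _ ≤ 2 * D := by linarith
    rw [abs_mul, abs_of_pos hτ] at h3
    rw [le_div_iff₀ hτ]
    linarith
  have hinc : ∀ (j : Fin 2) (δ : ℝ), 0 < δ →
      ∃ K : ℕ, ∀ k, K ≤ k → |F (k + 1) 1 j - F k 1 j| ≤ δ := by
    intro j δ hδ
    obtain ⟨K, hK⟩ := (Metric.tendsto_atTop.mp hc) (δ / D) (by positivity)
    refine ⟨K, fun k hk => ?_⟩
    have h1 : F (k + 1) 1 j - F k 1 j = c (k + 1) * F (k + 1) 0 j := by
      have := hrec1 k j; linarith
    rw [h1, abs_mul]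
    have hc1 : |c (k + 1)| ≤ δ / D := by
      have := hK (k + 1) (by omega)
      rw [Real.dist_eq, sub_zero] at this
      exact this.le
    have hb1 : |F (k + 1) 0 j| ≤ D := hbound (k + 1) (by omega) 0 j
    calc |c (k + 1)| * |F (k + 1) 0 j| ≤ (δ / D) * D :=
          mul_le_mul hc1 hb1 (abs_nonneg _) (by positivity)
      _ = δ := by field_simp
  have hb : ∀ j : Fin 2, Filter.Tendsto (fun k => F k 1 j) Filter.atTop (nhds 0) := by
    intro j
    exact aux_tendsto _ (2 * D / τ) (fun m n hm => hsum j m n hm) (hinc j)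
  obtain ⟨K0, hK0⟩ := Metric.tendsto_atTop.mp (hb 0) (1 / (4 * D)) (by positivity)
  obtain ⟨K1, hK1⟩ := Metric.tendsto_atTop.mp (hb 1) (1 / (4 * D)) (by positivity)
  set k := max K0 K1 + 1 with hk
  have h0 : |F k 1 0| ≤ 1 / (4 * D) := by
    have := hK0 k (by omega)
    rw [Real.dist_eq, sub_zero] at this
    exact this.le
  have h1 : |F k 1 1| ≤ 1 / (4 * D) := by
    have := hK1 k (by omega)
    rw [Real.dist_eq, sub_zero] at this
    exact this.le
  have hdk := hdet k
  rw [Matrix.det_fin_two] at hdk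
  have e1 : |F k 0 0 * F k 1 1| ≤ D * (1 / (4 * D)) := by
    rw [abs_mul]
    exact mul_le_mul (hbound k (by omega) 0 0) h1 (abs_nonneg _) hDpos.le
  have e2 : |F k 0 1 * F k 1 0| ≤ D * (1 / (4 * D)) := by
    rw [abs_mul]
    exact mul_le_mul (hbound k (by omega) 0 1) h0 (abs_nonneg _) hDpos.le
  have e3 : D * (1 / (4 * D)) = 1 / 4 := by field_simp
  have e4 : (1 : ℝ) = |F k 0 0 * F k 1 1 - F k 0 1 * F k 1 0| := by rw [hdk]; norm_num
  have e5 : |F k 0 0 * F k 1 1 - F k 0 1 * F k 1 0|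
      ≤ |F k 0 0 * F k 1 1| + |F k 0 1 * F k 1 0| := abs_sub _ _
  linarith
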